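/- Let $V$ be a finite set with a metric $w$, and let $f$ be any non-negative function on the non-negative integers. For $S \subseteq V$ define $w_S = \min_{i \neq j \in S} w(i,j)$ (with $w_S = 0$ if $|S| < 2$), and $W = \max_{S \subseteq V} w_S f(|S|)$. Consider the greedy farthest-point ordering $v_1, v_2, \dots, v_n$ of $V$: $v_1$ is arbitrary, and $v_{i+1}$ maximizes $\min_{u \in \{v_1,\dots,v_i\}} w(u, v)$ over $v \notin \{v_1,\dots,v_i\}$. Let $V_i = \{v_1,\dots,v_i\}$ and $M' = \max_{2 \le i \le n} w_{V_i} f(i)$. Then $W \le 2 M'$. -/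
import Mathlib


open Finset

/-- `wS S` is the minimum distance between two distinct points of `S`
(with the convention `wS S = 0` if `S` has fewer than two points,
since `sInf ∅ = 0` in `ℝ`). -/
noncomputable def wS {V : Type*} [MetricSpace V] (S : Finset V) : ℝ :=
  sInf {d | ∃ i ∈ S, ∃ j ∈ S, i ≠ j ∧ d = dist i j}

/-- The first `k` points of the ordering `v`. -/
noncomputable def Vset {V : Type*} [DecidableEq V] {n : ℕ} (v : Fin n ≃ V) (k : ℕ) : Finset V :=
  (Finset.univ.filter (fun j : Fin n => (j : ℕ) < k)).image v

noncomputable def dd {V : Type*} [MetricSpace V] (u : V) (T : Finset V) : ℝ :=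
  sInf {d | ∃ x ∈ T, d = dist u x}

lemma dd_bdd {V : Type*} [MetricSpace V] (u : V) (T : Finset V) :
    BddBelow {d | ∃ x ∈ T, d = dist u x} := by
  refine ⟨0, ?_⟩
  rintro d ⟨x, hx, rfl⟩
  exact dist_nonneg

lemma dd_nonneg {V : Type*} [MetricSpace V] (u : V) (T : Finset V) : 0 ≤ dd u T := by
  apply Real.sInf_nonneg
  rintro d ⟨x, hx, rfl⟩
  exact dist_nonneg

lemma dd_le {V : Type*} [MetricSpace V] (u : V) {T : Finset V} {x : V} (hx : x ∈ T) :
    dd u T ≤ dist u x :=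
  csInf_le (dd_bdd u T) ⟨x, hx, rfl⟩

lemma dd_mono {V : Type*} [MetricSpace V] (u : V) {T T' : Finset V} (hT : T.Nonempty)
    (hsub : T ⊆ T') : dd u T' ≤ dd u T := by
  obtain ⟨x, hx⟩ := hT
  refine csInf_le_csInf (dd_bdd u T') ⟨dist u x, x, hx, rfl⟩ ?_
  rintro d ⟨y, hy, rfl⟩
  exact ⟨y, hsub hy, rfl⟩

lemma exists_dd {V : Type*} [MetricSpace V] (u : V) {T : Finset V} (hT : T.Nonempty) :
    ∃ x ∈ T, dist u x ≤ dd u T := by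
  have hset : {d | ∃ x ∈ T, d = dist u x} = ↑(T.image (fun x => dist u x)) := by
    ext d
    simp [eq_comm]
  have hne : (T.image (fun x => dist u x)).Nonempty := hT.image _
  have hmem : sInf ↑(T.image (fun x => dist u x)) ∈ T.image (fun x => dist u x) :=
    hne.csInf_mem
  rw [Finset.mem_image] at hmem
  obtain ⟨x, hx, hxd⟩ := hmem
  exact ⟨x, hx, by rw [hxd, dd, hset]⟩

lemma wS_nonneg {V : Type*} [MetricSpace V] (S : Finset V) : 0 ≤ wS S := by
  apply Real.sInf_nonneg
  rintro d ⟨i, hi, j, hj, hij, rfl⟩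
  exact dist_nonneg

lemma wS_le {V : Type*} [MetricSpace V] {S : Finset V} {i j : V} (hi : i ∈ S) (hj : j ∈ S)
    (hij : i ≠ j) : wS S ≤ dist i j := by
  refine csInf_le ⟨0, ?_⟩ ⟨i, hi, j, hj, hij, rfl⟩
  rintro d ⟨a, _, b, _, _, rfl⟩
  exact dist_nonneg

lemma mem_Vset {V : Type*} [DecidableEq V] {n : ℕ} (v : Fin n ≃ V) (k : ℕ) (j : Fin n) :
    v j ∈ Vset v k ↔ (j : ℕ) < k := by
  simp only [Vset, Finset.mem_image, Finset.mem_filter, Finset.mem_univ, true_and]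
  constructor
  · rintro ⟨p, hp, hpj⟩
    rwa [v.injective hpj] at hp
  · intro h
    exact ⟨j, h, rfl⟩

lemma Vset_card {V : Type*} [DecidableEq V] [Fintype V] {n : ℕ} (v : Fin n ≃ V) {k : ℕ}
    (hk : k ≤ n) : (Vset v k).card = k := by
  rw [Vset, Finset.card_image_of_injective _ v.injective]
  have h : (Finset.univ.filter fun j : Fin n => (j : ℕ) < k).image Fin.val = Finset.range k := by
    ext m
    simp only [Finset.mem_image, Finset.mem_filter, Finset.mem_univ, true_and, Finset.mem_range]
    constructor
    · rintro ⟨j, hj, rfl⟩; exact hj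
    · intro hm; exact ⟨⟨m, lt_of_lt_of_le hm hk⟩, hm, rfl⟩
  have := congrArg Finset.card h
  rwa [Finset.card_image_of_injective _ Fin.val_injective, Finset.card_range] at this

lemma mem_Vset' {V : Type*} [DecidableEq V] {n : ℕ} (v : Fin n ≃ V) (k : ℕ) {x : V} :
    x ∈ Vset v k ↔ ∃ j : Fin n, (j : ℕ) < k ∧ v j = x := by
  simp [Vset]

lemma Vset_mono {V : Type*} [DecidableEq V] {n : ℕ} (v : Fin n ≃ V) {k k' : ℕ} (h : k ≤ k') :
    Vset v k ⊆ Vset v k' := by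
  apply Finset.image_subset_image
  intro j
  simp only [Finset.mem_filter, Finset.mem_univ, true_and]
  omega

lemma Vset_nonempty {V : Type*} [DecidableEq V] {n : ℕ} (v : Fin n ≃ V) {k : ℕ} (hk : 0 < k)
    (hn : 0 < n) : (Vset v k).Nonempty :=
  ⟨v ⟨0, hn⟩, (mem_Vset v k _).mpr hk⟩

/-- For a greedy farthest-point ordering of a finite metric space,
`W = max_S wS(S) f(|S|)` is at most `2 M'` where
`M' = max_{2 ≤ i ≤ n} wS(V_i) f(i)`. -/
theorem stmt0 {V : Type*} [DecidableEq V] [Fintype V] [MetricSpace V] {n : ℕ} (hn : 2 ≤ n)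
    (hcard : Fintype.card V = n) (f : ℕ → ℝ) (hf : ∀ k, 0 ≤ f k)
    (v : Fin n ≃ V)
    (greedy : ∀ i : Fin n, ∀ u : V, u ∉ Vset v i →
      sInf {d | ∃ x ∈ Vset v (i : ℕ), d = dist u x} ≤
        sInf {d | ∃ x ∈ Vset v (i : ℕ), d = dist (v i) x}) :
    (Finset.univ : Finset (Finset V)).sup' Finset.univ_nonempty
        (fun S => wS S * f S.card)
      ≤ 2 * (Finset.Icc 2 n).sup' (Finset.nonempty_Icc.mpr hn)
        (fun k => wS (Vset v k) * f k) := by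
  have greedy' : ∀ i : Fin n, ∀ u : V, u ∉ Vset v i →
      dd u (Vset v (i : ℕ)) ≤ dd (v i) (Vset v (i : ℕ)) := greedy
  have hn0 : 0 < n := by omega
  have hsup0 : 0 ≤ (Finset.Icc 2 n).sup' (Finset.nonempty_Icc.mpr hn)
      (fun k => wS (Vset v k) * f k) := by
    refine le_trans ?_ (Finset.le_sup' _ (Finset.mem_Icc.mpr ⟨le_refl 2, hn⟩))
    exact mul_nonneg (wS_nonneg _) (hf 2)
  apply Finset.sup'_le
  intro S _
  by_cases hS : 2 ≤ S.card
  · set k := S.card with hk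
    have hkn : k ≤ n := by rw [← hcard]; exact Finset.card_le_univ S
    set i : Fin n := ⟨k - 1, by omega⟩ with hi
    have hiv : (i : ℕ) = k - 1 := rfl
    set δ : ℝ := dd (v i) (Vset v (k - 1)) with hδ
    have hne1 : (Vset v (k - 1)).Nonempty := Vset_nonempty v (by omega) hn0
    -- Claim A: every point is within δ of Vset v (k-1)
    have claimA : ∀ u : V, ∃ x ∈ Vset v (k - 1), dist u x ≤ δ := by
      intro u
      by_cases hu : u ∈ Vset v (k - 1)
      · exact ⟨u, hu, by simpa using dd_nonneg (v i) (Vset v (k - 1))⟩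
      · have h1 : dd u (Vset v (k - 1)) ≤ δ := by
          have := greedy' i u (by rwa [hiv])
          rwa [hiv] at this
        obtain ⟨x, hx, hdx⟩ := exists_dd u hne1
        exact ⟨x, hx, hdx.trans h1⟩
    -- pigeonhole
    choose g hg1 hg2 using claimA
    have hcard' : (Vset v (k - 1)).card < S.card := by
      rw [Vset_card v (by omega : k - 1 ≤ n), ← hk]; omega
    obtain ⟨s, hs, s', hs', hss', hgs⟩ :=
      Finset.exists_ne_map_eq_of_card_lt_of_maps_to hcard' (fun a _ => hg1 a)
    have hdss : dist s s' ≤ 2 * δ := by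
      calc dist s s' ≤ dist s (g s) + dist (g s) s' := dist_triangle _ _ _
        _ = dist s (g s) + dist s' (g s') := by rw [dist_comm (g s) s', hgs]
        _ ≤ δ + δ := add_le_add (hg2 s) (hg2 s')
        _ = 2 * δ := by ring
    -- Claim B: δ ≤ wS (Vset v k)
    have key : ∀ p q : Fin n, (p : ℕ) < (q : ℕ) → (q : ℕ) < k → δ ≤ dist (v q) (v p) := by
      intro p q hpq hqk
      have h1 : δ ≤ dd (v q) (Vset v (q : ℕ)) := by
        rcases eq_or_lt_of_le (Nat.lt_succ_iff.mp (by omega : (q : ℕ) < k - 1 + 1)) with h | h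
        · have hqi : q = i := Fin.ext (by rw [hiv, h])
          exact le_of_eq (by rw [hqi])
        · have hqmem : v i ∉ Vset v (q : ℕ) := by
            rw [mem_Vset, hiv]; omega
          have h2 := greedy' q (v i) hqmem
          have h3 : dd (v i) (Vset v (k - 1)) ≤ dd (v i) (Vset v (q : ℕ)) := by
            apply dd_mono _ (Vset_nonempty v (by omega) hn0) (Vset_mono v (by omega))
          exact h3.trans h2
      have h4 : dd (v q) (Vset v (q : ℕ)) ≤ dist (v q) (v p) :=
        dd_le _ ((mem_Vset v _ p).mpr hpq)
      exact h1.trans h4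
    have claimB : δ ≤ wS (Vset v k) := by
      apply le_csInf
      · refine ⟨dist (v ⟨0, hn0⟩) (v ⟨1, by omega⟩), v ⟨0, hn0⟩, ?_, v ⟨1, by omega⟩, ?_, ?_, rfl⟩
        · exact (mem_Vset v k _).mpr (by simpa using by omega)
        · exact (mem_Vset v k _).mpr (by simpa using by omega)
        · intro h
          have := v.injective h
          simp [Fin.ext_iff] at this
      · rintro d ⟨a, ha, b, hb, hab, rfl⟩
        rw [mem_Vset' v k] at ha hb
        obtain ⟨p, hp, rfl⟩ := ha
        obtain ⟨q, hq, rfl⟩ := hb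
        have hpq : (p : ℕ) ≠ (q : ℕ) := fun h => hab (congrArg v (Fin.ext h))
        rcases lt_or_gt_of_ne hpq with h | h
        · rw [dist_comm]; exact key p q h hq
        · exact key q p h hp
    have hSk : wS S ≤ 2 * wS (Vset v k) := by
      calc wS S ≤ dist s s' := wS_le hs hs' hss'
        _ ≤ 2 * δ := hdss
        _ ≤ 2 * wS (Vset v k) := by linarith
    calc wS S * f S.card ≤ 2 * wS (Vset v k) * f k :=
          mul_le_mul_of_nonneg_right hSk (hf _)
      _ = 2 * (wS (Vset v k) * f k) := by ring
      _ ≤ 2 * (Finset.Icc 2 n).sup' (Finset.nonempty_Icc.mpr hn) (fun k => wS (Vset v k) * f k) := by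
          have := Finset.le_sup' (fun k => wS (Vset v k) * f k)
            (Finset.mem_Icc.mpr ⟨hS, hkn⟩ : k ∈ Finset.Icc 2 n)
          linarith
  · have hwS : wS S = 0 := by
      have hempty : {d | ∃ i ∈ S, ∃ j ∈ S, i ≠ j ∧ d = dist i j} = ∅ := by
        ext d
        simp only [Set.mem_setOf_eq, Set.mem_empty_iff_false, iff_false]
        rintro ⟨a, ha, b, hb, hab, rfl⟩
        exact hS (Finset.one_lt_card.mpr ⟨a, ha, b, hb, hab⟩)
      rw [wS, hempty, Real.sInf_empty]
    rw [hwS, zero_mul]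
    linarith
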